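/- For k ∈ {1,…,n−1}, the product u_{n−1} u_{n−2} ⋯ u_{n−k} in TL_n corresponds, as a planar diagram, to the matching with arcs v_{n−1}v_n and v_{n+k}v_{n+k+1} and n−2 propagating lines; under the outdegree bijection this is the triangulation of the (n+2)-gon consisting of the diagonal p_{k+1}p_{k+3} together with n−2 diagonals incident to p_1. -/
import Mathlib


/-- Two chords/diagonals `e = (e₁,e₂)` and `f = (f₁,f₂)` (each with first
coordinate < second coordinate) of a convex polygon cross. -/
def Crosses (e f : ℕ × ℕ) : Prop :=
  (e.1 < f.1 ∧ f.1 < e.2 ∧ e.2 < f.2) ∨ (f.1 < e.1 ∧ e.1 < f.2 ∧ f.2 < e.2)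

instance (e f : ℕ × ℕ) : Decidable (Crosses e f) := by unfold Crosses; infer_instance

/-- `e` is a diagonal of the convex `(n+2)`-gon with points `0,…,n+1`
(0-indexed; point `i` stands for `p_{i+1}`), i.e. a chord joining two
non-adjacent points which is not the hull edge `p₁p_{n+2} = (0,n+1)`. -/
def IsDiag (n : ℕ) (e : ℕ × ℕ) : Prop :=
  e.1 + 2 ≤ e.2 ∧ e.2 ≤ n + 1 ∧ ¬(e.1 = 0 ∧ e.2 = n + 1)

/-- A triangulation of the convex `(n+2)`-gon: a maximal (equivalently, of
cardinality `n-1`) set of pairwise non-crossing diagonals. -/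
def IsTriangulation (n : ℕ) (T : Finset (ℕ × ℕ)) : Prop :=
  (∀ e ∈ T, IsDiag n e) ∧ (∀ e ∈ T, ∀ f ∈ T, ¬ Crosses e f) ∧ T.card = n - 1

/-- Outdegree `d_{i+1}` of point `i` (0-indexed) of a triangulation: the number
of diagonals directed out of `i` (each diagonal directed from lower to higher
index), counting the hull edge `p₁p_{n+2}` (at `i = 0`) but no other hull edge. -/
def triOutdeg (T : Finset (ℕ × ℕ)) (i : ℕ) : ℕ :=
  (T.filter (fun e => e.1 = i)).card + (if i = 0 then 1 else 0)

/-- `M` is a plane (non-crossing) perfect matching on the `2n` points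
`0,…,2n-1` (0-indexed; vertex `v` stands for `v_{v+1}`) in convex position,
edges recorded as pairs `(a,b)` with `a < b`. -/
def IsNCMatching (n : ℕ) (M : Finset (ℕ × ℕ)) : Prop :=
  (∀ e ∈ M, e.1 < e.2 ∧ e.2 < 2 * n) ∧
  (∀ e ∈ M, ∀ f ∈ M, ¬ Crosses e f) ∧
  (∀ v < 2 * n, ∃ e ∈ M, e.1 = v ∨ e.2 = v) ∧
  M.card = n

/-- Outdegree `b_{v+1}` of vertex `v` of a matching (each edge directed from
lower to higher index): `1` if `v` is the lower endpoint of its edge, else `0`. -/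
def matchOutdeg (M : Finset (ℕ × ℕ)) (v : ℕ) : ℕ :=
  (M.filter (fun e => e.1 = v)).card

/-- Number of zeros of the 0/1-sequence `B` strictly before position `m`. -/
def zerosBeforeN (B : ℕ → ℕ) (m : ℕ) : ℕ :=
  ((Finset.range m).filter (fun t => B t = 0)).card

/-- The bijection of AABV2017 on outdegree sequences: `BtoDn n B i` is the
number of 1s of `B` strictly between the `i`-th and `(i+1)`-st zero (0-indexed;
for `i = 0` the number of 1s before the first zero), i.e. `d_{i+1}`. -/
def BtoDn (n : ℕ) (B : ℕ → ℕ) (i : ℕ) : ℕ :=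
  ((Finset.range (2 * n)).filter (fun m => B m = 1 ∧ zerosBeforeN B m = i)).card

/-- The (0-indexed) matching diagram of the identity of `TL_n`: propagating
lines `v_{k} v_{2n+1-k}` (1-indexed), i.e. edges `(t, 2n-1-t)`. -/
def idMatch (n : ℕ) : Finset (ℕ × ℕ) :=
  (Finset.range n).image (fun t => (t, 2 * n - 1 - t))

/-- The (0-indexed) matching diagram of the generator `u_i` of `TL_n`
(`1 ≤ i ≤ n-1`): arcs `v_i v_{i+1}` and `v_{2n-i} v_{2n-i+1}` (1-indexed) and
propagating lines `v_k v_{2n+1-k}` for the remaining vertices. -/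
def genMatch (n i : ℕ) : Finset (ℕ × ℕ) :=
  {(i - 1, i), (2 * n - i - 1, 2 * n - i)} ∪
    ((Finset.range n).filter (fun t => t ≠ i - 1 ∧ t ≠ i)).image
      (fun t => (t, 2 * n - 1 - t))

/-- The fan triangulation of the `(n+2)`-gon at `p₁`: all diagonals `p₁ p_j`,
`3 ≤ j ≤ n+1` (0-indexed: `(0,t)` for `2 ≤ t ≤ n`). -/
def fanTri (n : ℕ) : Finset (ℕ × ℕ) :=
  (Finset.Icc 2 n).image (fun t => ((0 : ℕ), t))

/-- The triangulation of the `(n+2)`-gon corresponding to the generator `u_i`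
of `TL_n` (0-indexed points): the diagonal `e_i = p_{n-i+1}p_{n-i+3}`, the
diagonal `f_i = p₂p_{n-i+3}`, the fan `p₁p_j`, `n-i+3 ≤ j ≤ n+1`, at `p₁`, and
the fan `p₂p_j`, `4 ≤ j ≤ n-i+1`, at `p₂`. -/
def genTri (n i : ℕ) : Finset (ℕ × ℕ) :=
  {(n - i, n - i + 2), (1, n - i + 2)} ∪
    (Finset.Icc (n - i + 2) n).image (fun t => ((0 : ℕ), t)) ∪
    (Finset.Icc 3 (n - i)).image (fun t => ((1 : ℕ), t))

/-- Embedding of the external vertices of the concatenation of two `TL_n`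
diagrams `M₁` (top) and `M₂` (bottom): vertices `0,…,2n-1` of `M₁` keep their
codes, vertices `v` of `M₂` get codes `2n + v`. Top vertices of the product
are the top vertices of `M₁`, bottom vertices are the bottom vertices of `M₂`. -/
def tlEmbed (n v : ℕ) : ℕ := if v < n then v else 2 * n + v

/-- One step of connectivity in the vertical concatenation of the diagrams
`M₁` (on codes `0,…,2n-1`) and `M₂` (on codes `2n,…,4n-1`): edges of `M₁`,
edges of `M₂`, and the gluing of the bottom row of `M₁` to the top row of `M₂`
(bottom geometric position `j` of `M₁` is the 1-indexed vertex `v_{2n-j}`,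
i.e. code `2n-1-j`, which is glued to code `2n + j`). -/
def ComposeStep (n : ℕ) (M₁ M₂ : Finset (ℕ × ℕ)) (a b : ℕ) : Prop :=
  (a, b) ∈ M₁ ∨ (b, a) ∈ M₁ ∨
  (∃ e ∈ M₂, a = 2 * n + e.1 ∧ b = 2 * n + e.2) ∨
  (∃ e ∈ M₂, b = 2 * n + e.1 ∧ a = 2 * n + e.2) ∨
  (∃ j < n, (a = 2 * n - 1 - j ∧ b = 2 * n + j) ∨ (b = 2 * n - 1 - j ∧ a = 2 * n + j))

/-- `M` is the product diagram `M₁ ⬝ M₂` in `TL_n` (with `α = 1`, so loops are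
simply discarded): `M` is a non-crossing perfect matching, and each of its
edges joins two external vertices that are connected in the concatenation. -/
def IsCompose (n : ℕ) (M₁ M₂ M : Finset (ℕ × ℕ)) : Prop :=
  IsNCMatching n M ∧
  ∀ e ∈ M, Relation.EqvGen (ComposeStep n M₁ M₂) (tlEmbed n e.1) (tlEmbed n e.2)

/-- `M` is the product (as `TL_n` diagrams, left to right) of the given list of
diagrams; the empty product is the identity diagram. -/
def IsProdOf (n : ℕ) : List (Finset (ℕ × ℕ)) → Finset (ℕ × ℕ) → Prop
  | [], M => M = idMatch n
  | D :: rest, M => ∃ P, IsProdOf n rest P ∧ IsCompose n D P M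

/-- The matching with arcs `v_{n-1}v_n` and `v_{n+k}v_{n+k+1}` (1-indexed) and
`n-2` (non-crossing, hence uniquely determined) propagating lines. -/
def prodMatch (n k : ℕ) : Finset (ℕ × ℕ) :=
  {(n - 2, n - 1), (n + k - 1, n + k)} ∪
    (Finset.range (n - k - 1)).image (fun t => (t, 2 * n - 1 - t)) ∪
    (Finset.Icc (n - k - 1) (n - 3)).image (fun t => (t, 2 * n - 3 - t))

/-! ### Auxiliary development -/

/-- The diagram of the product `u_m u_{m-1} ⋯ u_{m-j+1}` (for `1 ≤ j ≤ m ≤ n-1`). -/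
def shiftMatch (n m j : ℕ) : Finset (ℕ × ℕ) :=
  {(m - 1, m), (2 * n - m + j - 2, 2 * n - m + j - 1)} ∪
    ((Finset.range n).filter (fun t => t < m - j ∨ m < t)).image (fun t => (t, 2 * n - 1 - t)) ∪
    (Finset.Ico (m - j) (m - 1)).image (fun t => (t, 2 * n - 3 - t))

lemma mem_shiftMatch {n m j a b : ℕ} :
    (a, b) ∈ shiftMatch n m j ↔
      (a = m - 1 ∧ b = m) ∨
      (a = 2 * n - m + j - 2 ∧ b = 2 * n - m + j - 1) ∨
      (a < n ∧ (a < m - j ∨ m < a) ∧ b = 2 * n - 1 - a) ∨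
      (m - j ≤ a ∧ a < m - 1 ∧ b = 2 * n - 3 - a) := by
  simp only [shiftMatch, Finset.mem_union, Finset.mem_insert, Finset.mem_singleton,
    Finset.mem_image, Finset.mem_filter, Finset.mem_range, Finset.mem_Ico, Prod.mk.injEq]
  constructor
  · rintro (((⟨rfl, rfl⟩ | ⟨rfl, rfl⟩) | ⟨t, ⟨ht, hp⟩, rfl, rfl⟩) | ⟨t, ht, rfl, rfl⟩)
    · exact Or.inl ⟨rfl, rfl⟩
    · exact Or.inr (Or.inl ⟨rfl, rfl⟩)
    · exact Or.inr (Or.inr (Or.inl ⟨ht, hp, rfl⟩))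
    · exact Or.inr (Or.inr (Or.inr ⟨ht.1, ht.2, rfl⟩))
  · rintro (⟨rfl, rfl⟩ | ⟨rfl, rfl⟩ | ⟨h1, h2, rfl⟩ | ⟨h1, h2, rfl⟩)
    · exact Or.inl (Or.inl (Or.inl ⟨rfl, rfl⟩))
    · exact Or.inl (Or.inl (Or.inr ⟨rfl, rfl⟩))
    · exact Or.inl (Or.inr ⟨a, ⟨h1, h2⟩, rfl, rfl⟩)
    · exact Or.inr ⟨a, ⟨h1, h2⟩, rfl, rfl⟩

lemma mem_genMatch {n m a b : ℕ} :
    (a, b) ∈ genMatch n m ↔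
      (a = m - 1 ∧ b = m) ∨
      (a = 2 * n - m - 1 ∧ b = 2 * n - m) ∨
      (a < n ∧ a ≠ m - 1 ∧ a ≠ m ∧ b = 2 * n - 1 - a) := by
  simp only [genMatch, Finset.mem_union, Finset.mem_insert, Finset.mem_singleton,
    Finset.mem_image, Finset.mem_filter, Finset.mem_range, Prod.mk.injEq]
  constructor
  · rintro ((⟨rfl, rfl⟩ | ⟨rfl, rfl⟩) | ⟨t, ⟨ht, hp1, hp2⟩, rfl, rfl⟩)
    · exact Or.inl ⟨rfl, rfl⟩
    · exact Or.inr (Or.inl ⟨rfl, rfl⟩)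
    · exact Or.inr (Or.inr ⟨ht, hp1, hp2, rfl⟩)
  · rintro (⟨rfl, rfl⟩ | ⟨rfl, rfl⟩ | ⟨h1, h2, h3, rfl⟩)
    · exact Or.inl (Or.inl ⟨rfl, rfl⟩)
    · exact Or.inl (Or.inr ⟨rfl, rfl⟩)
    · exact Or.inr ⟨a, ⟨h1, h2, h3⟩, rfl, rfl⟩

lemma mem_idMatch {n a b : ℕ} :
    (a, b) ∈ idMatch n ↔ a < n ∧ b = 2 * n - 1 - a := by
  simp only [idMatch, Finset.mem_image, Finset.mem_range, Prod.mk.injEq]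
  constructor
  · rintro ⟨t, ht, rfl, rfl⟩; exact ⟨ht, rfl⟩
  · rintro ⟨h1, rfl⟩; exact ⟨a, h1, rfl, rfl⟩

lemma prodMatch_eq_shift {n k : ℕ} (h1 : 1 ≤ k) (h2 : k ≤ n - 1) :
    prodMatch n k = shiftMatch n (n - 1) k := by
  have hn : 2 ≤ n := by omega
  ext ⟨a, b⟩
  rw [mem_shiftMatch]
  simp only [prodMatch, Finset.mem_union, Finset.mem_insert, Finset.mem_singleton,
    Finset.mem_image, Finset.mem_range, Finset.mem_Icc, Prod.mk.injEq]
  constructor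
  · rintro (((⟨rfl, rfl⟩ | ⟨rfl, rfl⟩) | ⟨t, ht, rfl, rfl⟩) | ⟨t, ht, rfl, rfl⟩)
    · exact Or.inl ⟨by omega, by omega⟩
    · exact Or.inr (Or.inl ⟨by omega, by omega⟩)
    · exact Or.inr (Or.inr (Or.inl ⟨by omega, Or.inl (by omega), by omega⟩))
    · by_cases hc : t < n - 2
      · exact Or.inr (Or.inr (Or.inr ⟨by omega, by omega, by omega⟩))
      · -- then n = 2, k = 1, t = 0 and the edge is the top arc
        exact Or.inl ⟨by omega, by omega⟩
  · rintro (⟨rfl, rfl⟩ | ⟨rfl, rfl⟩ | ⟨hn', hp, rfl⟩ | ⟨hp1, hp2, rfl⟩)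
    · exact Or.inl (Or.inl (Or.inl ⟨by omega, by omega⟩))
    · exact Or.inl (Or.inl (Or.inr ⟨by omega, by omega⟩))
    · exact Or.inl (Or.inr ⟨a, by omega, rfl, by omega⟩)
    · exact Or.inr ⟨a, by omega, rfl, by omega⟩

lemma crosses_mk {a b c d : ℕ} :
    Crosses (a, b) (c, d) ↔ (a < c ∧ c < b ∧ b < d) ∨ (c < a ∧ a < d ∧ d < b) := Iff.rfl

lemma card_shiftMatch {n m j : ℕ} (hj : 1 ≤ j) (hjm : j ≤ m) (hm : m ≤ n - 1) :
    (shiftMatch n m j).card = n := by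
  have hn : 2 ≤ n := by omega
  have hinj1 : Function.Injective (fun t : ℕ => (t, 2 * n - 1 - t)) := by
    intro a b h; exact (Prod.ext_iff.mp h).1
  have hinj2 : Function.Injective (fun t : ℕ => (t, 2 * n - 3 - t)) := by
    intro a b h; exact (Prod.ext_iff.mp h).1
  rw [shiftMatch, Finset.card_union_of_disjoint, Finset.card_union_of_disjoint]
  · have hA : ({(m - 1, m), (2 * n - m + j - 2, 2 * n - m + j - 1)} : Finset (ℕ × ℕ)).card = 2 := by
      rw [Finset.card_insert_of_notMem (by simp [Prod.ext_iff]; omega), Finset.card_singleton]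
    have hB : ((Finset.range n).filter (fun t => t < m - j ∨ m < t)).card = (m - j) + (n - m - 1) := by
      have : (Finset.range n).filter (fun t => t < m - j ∨ m < t)
          = Finset.range (m - j) ∪ Finset.Ioo m n := by
        ext t; simp only [Finset.mem_filter, Finset.mem_range, Finset.mem_union, Finset.mem_Ioo]
        omega
      rw [this, Finset.card_union_of_disjoint (by simp [Finset.disjoint_left]; omega)]
      rw [Finset.card_range, Nat.card_Ioo]
    rw [hA, Finset.card_image_of_injective _ hinj1, Finset.card_image_of_injective _ hinj2,
      hB, Nat.card_Ico]
    omega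
  · rw [Finset.disjoint_left]
    rintro ⟨a, b⟩ ha hb
    simp only [Finset.mem_insert, Finset.mem_singleton, Prod.mk.injEq] at ha
    simp only [Finset.mem_image, Finset.mem_filter, Finset.mem_range, Prod.mk.injEq] at hb
    obtain ⟨t, ht, rfl, rfl⟩ := hb
    omega
  · rw [Finset.disjoint_left]
    rintro ⟨a, b⟩ ha hb
    simp only [Finset.mem_union, Finset.mem_insert, Finset.mem_singleton, Prod.mk.injEq,
      Finset.mem_image, Finset.mem_filter, Finset.mem_range] at ha
    simp only [Finset.mem_image, Finset.mem_Ico, Prod.mk.injEq] at hb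
    obtain ⟨t, ht, rfl, rfl⟩ := hb
    rcases ha with (⟨h, h'⟩ | ⟨h, h'⟩) | ⟨s, hs, h, h'⟩ <;> omega

lemma ncShift {n m j : ℕ} (hj : 1 ≤ j) (hjm : j ≤ m) (hm : m ≤ n - 1) :
    IsNCMatching n (shiftMatch n m j) := by
  have hn : 2 ≤ n := by omega
  refine ⟨?_, ?_, ?_, card_shiftMatch hj hjm hm⟩
  · rintro ⟨a, b⟩ he
    rw [mem_shiftMatch] at he
    show a < b ∧ b < 2 * n
    rcases he with ⟨h, h'⟩ | ⟨h, h'⟩ | ⟨h, h', h''⟩ | ⟨h, h', h''⟩ <;> omega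
  · rintro ⟨a, b⟩ he ⟨c, d⟩ hf
    rw [mem_shiftMatch] at he hf
    rw [crosses_mk]
    rcases he with ⟨h, h'⟩ | ⟨h, h'⟩ | ⟨h, h', h''⟩ | ⟨h, h', h''⟩ <;>
      rcases hf with ⟨g, g'⟩ | ⟨g, g'⟩ | ⟨g, g', g''⟩ | ⟨g, g', g''⟩ <;> omega
  · intro v hv
    by_cases hc1 : v < m - j
    · exact ⟨(v, 2 * n - 1 - v),
        mem_shiftMatch.mpr (Or.inr (Or.inr (Or.inl ⟨by omega, Or.inl (by omega), rfl⟩))),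
        Or.inl rfl⟩
    by_cases hc2 : m - j ≤ v ∧ v < m - 1
    · exact ⟨(v, 2 * n - 3 - v),
        mem_shiftMatch.mpr (Or.inr (Or.inr (Or.inr ⟨by omega, by omega, rfl⟩))),
        Or.inl rfl⟩
    by_cases hc3 : v = m - 1 ∨ v = m
    · exact ⟨(m - 1, m), mem_shiftMatch.mpr (Or.inl ⟨rfl, rfl⟩),
        show m - 1 = v ∨ m = v by omega⟩
    by_cases hc4 : m < v ∧ v < n
    · exact ⟨(v, 2 * n - 1 - v),
        mem_shiftMatch.mpr (Or.inr (Or.inr (Or.inl ⟨by omega, Or.inr (by omega), rfl⟩))),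
        Or.inl rfl⟩
    by_cases hc5 : v ≤ 2 * n - m - 2
    · exact ⟨(2 * n - 1 - v, v),
        mem_shiftMatch.mpr (Or.inr (Or.inr (Or.inl ⟨by omega, Or.inr (by omega), by omega⟩))),
        Or.inr rfl⟩
    by_cases hc6 : v ≤ 2 * n - m + j - 3
    · exact ⟨(2 * n - 3 - v, v),
        mem_shiftMatch.mpr (Or.inr (Or.inr (Or.inr ⟨by omega, by omega, by omega⟩))),
        Or.inr rfl⟩
    by_cases hc7 : v = 2 * n - m + j - 2 ∨ v = 2 * n - m + j - 1
    · exact ⟨(2 * n - m + j - 2, 2 * n - m + j - 1),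
        mem_shiftMatch.mpr (Or.inr (Or.inl ⟨rfl, rfl⟩)),
        show 2 * n - m + j - 2 = v ∨ 2 * n - m + j - 1 = v by omega⟩
    · exact ⟨(2 * n - 1 - v, v),
        mem_shiftMatch.mpr (Or.inr (Or.inr (Or.inl ⟨by omega, Or.inl (by omega), by omega⟩))),
        Or.inr rfl⟩

lemma outdeg_prodMatch {n k : ℕ} (h1 : 1 ≤ k) (h2 : k ≤ n - 1) (v : ℕ) :
    matchOutdeg (prodMatch n k) v = if v ≤ n - 2 ∨ v = n + k - 1 then 1 else 0 := by
  have hn : 2 ≤ n := by omega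
  rw [matchOutdeg, prodMatch_eq_shift h1 h2]
  have key : ∀ w : ℕ, (v, w) ∈ shiftMatch n (n - 1) k →
      (∀ a b : ℕ, (a, b) ∈ shiftMatch n (n - 1) k → a = v → b = w) →
      ((shiftMatch n (n - 1) k).filter (fun e => e.1 = v)).card = 1 := by
    intro w hw huniq
    have : (shiftMatch n (n - 1) k).filter (fun e => e.1 = v) = {(v, w)} := by
      ext ⟨a, b⟩
      simp only [Finset.mem_filter, Finset.mem_singleton, Prod.mk.injEq]
      constructor
      · rintro ⟨hm, rfl⟩
        exact ⟨rfl, huniq a b hm rfl⟩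
      · rintro ⟨rfl, rfl⟩
        exact ⟨hw, rfl⟩
    rw [this, Finset.card_singleton]
  split_ifs with h
  · have huniq : ∀ w w' : ℕ, (v, w) ∈ shiftMatch n (n - 1) k → (v, w') ∈ shiftMatch n (n - 1) k → w = w' := by
      intro w w' hw hw'
      rw [mem_shiftMatch] at hw hw'
      rcases hw with ⟨g, g'⟩ | ⟨g, g'⟩ | ⟨g, g', g''⟩ | ⟨g, g', g''⟩ <;>
        rcases hw' with ⟨f, f'⟩ | ⟨f, f'⟩ | ⟨f, f', f''⟩ | ⟨f, f', f''⟩ <;> omega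
    by_cases hv1 : v + k + 2 ≤ n
    · have hw : (v, 2 * n - 1 - v) ∈ shiftMatch n (n - 1) k :=
        mem_shiftMatch.mpr (Or.inr (Or.inr (Or.inl ⟨by omega, Or.inl (by omega), rfl⟩)))
      exact key _ hw (fun a b hm ha => huniq _ _ (ha ▸ hm) hw)
    by_cases hv2 : v + 3 ≤ n
    · have hw : (v, 2 * n - 3 - v) ∈ shiftMatch n (n - 1) k :=
        mem_shiftMatch.mpr (Or.inr (Or.inr (Or.inr ⟨by omega, by omega, rfl⟩)))
      exact key _ hw (fun a b hm ha => huniq _ _ (ha ▸ hm) hw)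
    by_cases hv3 : v = n - 2
    · have hw : (v, n - 1) ∈ shiftMatch n (n - 1) k :=
        mem_shiftMatch.mpr (Or.inl ⟨by omega, by omega⟩)
      exact key _ hw (fun a b hm ha => huniq _ _ (ha ▸ hm) hw)
    · have hw : (v, n + k) ∈ shiftMatch n (n - 1) k :=
        mem_shiftMatch.mpr (Or.inr (Or.inl ⟨by omega, by omega⟩))
      exact key _ hw (fun a b hm ha => huniq _ _ (ha ▸ hm) hw)
  · rw [Finset.card_eq_zero, Finset.filter_eq_empty_iff]
    rintro ⟨a, b⟩ he
    rw [mem_shiftMatch] at he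
    show ¬ a = v
    rcases he with ⟨g, g'⟩ | ⟨g, g'⟩ | ⟨g, g', g''⟩ | ⟨g, g', g''⟩ <;> omega

lemma zb_succ (B : ℕ → ℕ) (m : ℕ) :
    zerosBeforeN B (m + 1) = zerosBeforeN B m + (if B m = 0 then 1 else 0) := by
  unfold zerosBeforeN
  rw [Finset.range_add_one, Finset.filter_insert]
  split_ifs with h
  · rw [Finset.card_insert_of_notMem (by simp)]
  · rfl

lemma zb_formula {n k : ℕ} (h1 : 1 ≤ k) (h2 : k ≤ n - 1) :
    ∀ m, m ≤ 2 * n →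
      zerosBeforeN (matchOutdeg (prodMatch n k)) m
        = if m ≤ n - 1 then 0 else if m ≤ n + k - 1 then m - (n - 1) else m - n := by
  intro m
  induction m with
  | zero => intro _; simp [zerosBeforeN]
  | succ m ih =>
    intro hm
    rw [zb_succ, ih (by omega)]
    have hind : (if matchOutdeg (prodMatch n k) m = 0 then 1 else 0 : ℕ)
        = if m ≤ n - 2 ∨ m = n + k - 1 then 0 else 1 := by
      rw [outdeg_prodMatch h1 h2]
      by_cases hB : m ≤ n - 2 ∨ m = n + k - 1
      · rw [if_pos hB, if_pos hB, if_neg (by norm_num)]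
      · rw [if_neg hB, if_neg hB, if_pos rfl]
    rw [hind]
    by_cases hB : m ≤ n - 2 ∨ m = n + k - 1 <;>
      [rw [if_pos hB]; rw [if_neg hB]] <;> split_ifs <;> omega

lemma btodn_prodMatch {n k : ℕ} (h1 : 1 ≤ k) (h2 : k ≤ n - 1) (t : ℕ) :
    BtoDn n (matchOutdeg (prodMatch n k)) t
      = if t = 0 then n - 1 else if t = k then 1 else 0 := by
  have hn : 2 ≤ n := by omega
  have hchar : ∀ m, m < 2 * n →
      ((matchOutdeg (prodMatch n k) m = 1 ∧ zerosBeforeN (matchOutdeg (prodMatch n k)) m = t)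
        ↔ ((t = 0 ∧ m < n - 1) ∨ (t = k ∧ m = n + k - 1))) := by
    intro m hm
    rw [outdeg_prodMatch h1 h2, zb_formula h1 h2 m (by omega)]
    constructor
    · rintro ⟨ho, hz⟩
      split_ifs at ho hz <;> omega
    · rintro (⟨rfl, hm'⟩ | ⟨ht, rfl⟩)
      · rw [if_pos (by omega : m ≤ n - 2 ∨ m = n + k - 1), if_pos (by omega : m ≤ n - 1)]
        exact ⟨rfl, rfl⟩
      · rw [if_pos (by omega : n + k - 1 ≤ n - 2 ∨ n + k - 1 = n + k - 1)]
        rw [if_neg (by omega : ¬ n + k - 1 ≤ n - 1), if_pos (le_refl _)]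
        exact ⟨rfl, by omega⟩
  unfold BtoDn
  split_ifs with ha hb
  · have : (Finset.range (2 * n)).filter
        (fun m => matchOutdeg (prodMatch n k) m = 1 ∧ zerosBeforeN (matchOutdeg (prodMatch n k)) m = t)
        = Finset.range (n - 1) := by
      ext m
      simp only [Finset.mem_filter, Finset.mem_range]
      constructor
      · rintro ⟨hm, h⟩
        have := (hchar m hm).mp h
        omega
      · intro hm'
        exact ⟨by omega, (hchar m (by omega)).mpr (Or.inl ⟨ha, hm'⟩)⟩
    rw [this, Finset.card_range]
  · have : (Finset.range (2 * n)).filter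
        (fun m => matchOutdeg (prodMatch n k) m = 1 ∧ zerosBeforeN (matchOutdeg (prodMatch n k)) m = t)
        = {n + k - 1} := by
      ext m
      simp only [Finset.mem_filter, Finset.mem_range, Finset.mem_singleton]
      constructor
      · rintro ⟨hm, h⟩
        have := (hchar m hm).mp h
        omega
      · intro hm'
        exact ⟨by omega, (hchar m (by omega)).mpr (Or.inr ⟨hb, hm'⟩)⟩
    rw [this, Finset.card_singleton]
  · rw [Finset.card_eq_zero, Finset.filter_eq_empty_iff]
    intro m hm
    rw [Finset.mem_range] at hm
    rw [hchar m hm]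
    omega

/-- The fan at `p₁` avoiding the diagonal `p₁p_{k+2}`. -/
def fanF (n k : ℕ) : Finset (ℕ × ℕ) :=
  ((Finset.Icc 2 n).erase (k + 1)).image (fun t => ((0 : ℕ), t))

lemma mem_fanF {n k a b : ℕ} :
    (a, b) ∈ fanF n k ↔ a = 0 ∧ 2 ≤ b ∧ b ≤ n ∧ b ≠ k + 1 := by
  simp only [fanF, Finset.mem_image, Finset.mem_erase, Finset.mem_Icc, Prod.mk.injEq]
  constructor
  · rintro ⟨t, ⟨ht, ht2⟩, rfl, rfl⟩
    exact ⟨rfl, ht2.1, ht2.2, ht⟩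
  · rintro ⟨rfl, hb1, hb2, hb3⟩
    exact ⟨b, ⟨hb3, hb1, hb2⟩, rfl, rfl⟩

lemma card_fanF {n k : ℕ} (h1 : 1 ≤ k) (h2 : k ≤ n - 1) : (fanF n k).card = n - 2 := by
  have hn : 2 ≤ n := by omega
  rw [fanF, Finset.card_image_of_injective _ (fun a b h => (Prod.ext_iff.mp h).2),
    Finset.card_erase_of_mem (by simp only [Finset.mem_Icc]; omega), Nat.card_Icc]
  omega

lemma fanF_fst {n k : ℕ} : ∀ e ∈ fanF n k, e.1 = 0 := by
  rintro ⟨a, b⟩ he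
  exact (mem_fanF.mp he).1

lemma tri_fanF {n k : ℕ} (h1 : 1 ≤ k) (h2 : k ≤ n - 1) :
    IsTriangulation n (insert (k, k + 2) (fanF n k)) := by
  have hn : 2 ≤ n := by omega
  have hmem : ∀ a b : ℕ, (a, b) ∈ insert (k, k + 2) (fanF n k) ↔
      (a = k ∧ b = k + 2) ∨ (a = 0 ∧ 2 ≤ b ∧ b ≤ n ∧ b ≠ k + 1) := by
    intro a b
    rw [Finset.mem_insert, mem_fanF, Prod.mk.injEq]
  refine ⟨?_, ?_, ?_⟩
  · rintro ⟨a, b⟩ he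
    rw [hmem] at he
    unfold IsDiag
    show a + 2 ≤ b ∧ b ≤ n + 1 ∧ ¬(a = 0 ∧ b = n + 1)
    rcases he with ⟨rfl, rfl⟩ | ⟨rfl, hb1, hb2, hb3⟩ <;> omega
  · rintro ⟨a, b⟩ he ⟨c, d⟩ hf
    rw [hmem] at he hf
    rw [crosses_mk]
    rcases he with ⟨rfl, rfl⟩ | ⟨rfl, g1, g2, g3⟩ <;>
      rcases hf with ⟨rfl, rfl⟩ | ⟨rfl, f1, f2, f3⟩ <;> omega
  · rw [Finset.card_insert_of_notMem (fun hc => by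
      have := (mem_fanF.mp hc).1; omega), card_fanF h1 h2]
    omega

lemma triOutdeg_fanF {n k : ℕ} (h1 : 1 ≤ k) (h2 : k ≤ n - 1) (t : ℕ) :
    triOutdeg (insert (k, k + 2) (fanF n k)) t
      = if t = 0 then n - 1 else if t = k then 1 else 0 := by
  have hn : 2 ≤ n := by omega
  unfold triOutdeg
  split_ifs with ha hb
  · subst ha
    have : (insert (k, k + 2) (fanF n k)).filter (fun e => e.1 = 0) = fanF n k := by
      ext ⟨a, b⟩
      simp only [Finset.mem_filter, Finset.mem_insert, Prod.mk.injEq]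
      constructor
      · rintro ⟨(⟨rfl, rfl⟩ | hf), h0⟩
        · exact absurd h0 (by omega)
        · exact hf
      · intro hf
        exact ⟨Or.inr hf, (mem_fanF.mp hf).1⟩
    rw [this, card_fanF h1 h2]
    omega
  · have : (insert (k, k + 2) (fanF n k)).filter (fun e => e.1 = t) = {(k, k + 2)} := by
      ext ⟨a, b⟩
      simp only [Finset.mem_filter, Finset.mem_insert, Finset.mem_singleton, Prod.mk.injEq]
      constructor
      · rintro ⟨(⟨rfl, rfl⟩ | hf), h0⟩
        · exact ⟨rfl, rfl⟩
        · have := (mem_fanF.mp hf).1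
          show a = k ∧ b = k + 2
          omega
      · rintro ⟨rfl, rfl⟩
        exact ⟨Or.inl ⟨rfl, rfl⟩, by omega⟩
    rw [this, Finset.card_singleton]
  · have : (insert (k, k + 2) (fanF n k)).filter (fun e => e.1 = t) = ∅ := by
      rw [Finset.filter_eq_empty_iff]
      rintro ⟨a, b⟩ hf
      rcases Finset.mem_insert.mp hf with h | h
      · rw [Prod.mk.injEq] at h
        show ¬ a = t
        omega
      · have := (mem_fanF.mp h).1
        show ¬ a = t
        omega
    rw [this, Finset.card_empty]

lemma cs_left {n : ℕ} {M₁ M₂ : Finset (ℕ × ℕ)} {a b : ℕ} (h : (a, b) ∈ M₁) :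
    ComposeStep n M₁ M₂ a b := Or.inl h

lemma cs_right {n : ℕ} {M₁ M₂ : Finset (ℕ × ℕ)} {a b c d : ℕ} (h : (c, d) ∈ M₂)
    (ha : a = 2 * n + c) (hb : b = 2 * n + d) : ComposeStep n M₁ M₂ a b :=
  Or.inr (Or.inr (Or.inl ⟨(c, d), h, ha, hb⟩))

lemma cs_glue {n : ℕ} {M₁ M₂ : Finset (ℕ × ℕ)} {a b j : ℕ} (hj : j < n)
    (ha : a = 2 * n - 1 - j) (hb : b = 2 * n + j) : ComposeStep n M₁ M₂ a b :=
  Or.inr (Or.inr (Or.inr (Or.inr ⟨j, hj, Or.inl ⟨ha, hb⟩⟩)))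

lemma genMatch_eq_shift {n m : ℕ} (h1 : 1 ≤ m) (hm : m ≤ n - 1) :
    genMatch n m = shiftMatch n m 1 := by
  have hn : 2 ≤ n := by omega
  ext ⟨a, b⟩
  rw [mem_genMatch, mem_shiftMatch]
  constructor
  · rintro (⟨rfl, rfl⟩ | ⟨rfl, rfl⟩ | ⟨g1, g2, g3, rfl⟩)
    · exact Or.inl ⟨rfl, rfl⟩
    · exact Or.inr (Or.inl ⟨by omega, by omega⟩)
    · exact Or.inr (Or.inr (Or.inl ⟨g1, by omega, rfl⟩))
  · rintro (⟨rfl, rfl⟩ | ⟨rfl, rfl⟩ | ⟨g1, g2, rfl⟩ | ⟨g1, g2, rfl⟩)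
    · exact Or.inl ⟨rfl, rfl⟩
    · exact Or.inr (Or.inl ⟨by omega, by omega⟩)
    · exact Or.inr (Or.inr ⟨g1, by omega, by omega, rfl⟩)
    · exact absurd g2 (by omega)

lemma compose_base {n m : ℕ} (h1 : 1 ≤ m) (hm : m ≤ n - 1) :
    IsCompose n (genMatch n m) (idMatch n) (genMatch n m) := by
  have hn : 2 ≤ n := by omega
  set R := ComposeStep n (genMatch n m) (idMatch n) with hR
  have emb : ∀ v, v < n → tlEmbed n v = v := fun v hv => if_pos hv
  have emb2 : ∀ v, n ≤ v → tlEmbed n v = 2 * n + v := fun v hv => if_neg (by omega)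
  constructor
  · rw [genMatch_eq_shift h1 hm]; exact ncShift le_rfl h1 hm
  · rintro ⟨a, b⟩ he
    show Relation.EqvGen R (tlEmbed n a) (tlEmbed n b)
    rw [mem_genMatch] at he
    rcases he with ⟨rfl, rfl⟩ | ⟨rfl, rfl⟩ | ⟨g1, g2, g3, rfl⟩
    · rw [emb _ (by omega), emb _ (by omega)]
      exact Relation.EqvGen.rel _ _ (cs_left (mem_genMatch.mpr (Or.inl ⟨rfl, rfl⟩)))
    · rw [emb2 _ (by omega), emb2 _ (by omega)]
      have s1 : R (2 * n + m) (2 * n + (2 * n - m - 1)) :=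
        cs_right (mem_idMatch.mpr ⟨by omega, rfl⟩) rfl (by omega)
      have s2 : R (2 * n - m - 1) (2 * n + m) := cs_glue (j := m) (by omega) (by omega) rfl
      have s3 : R (2 * n - m - 1) (2 * n - m) :=
        cs_left (mem_genMatch.mpr (Or.inr (Or.inl ⟨rfl, rfl⟩)))
      have s4 : R (2 * n - m) (2 * n + (m - 1)) := cs_glue (j := m - 1) (by omega) (by omega) rfl
      have s5 : R (2 * n + (m - 1)) (2 * n + (2 * n - m)) :=
        cs_right (mem_idMatch.mpr ⟨by omega, rfl⟩) rfl (by omega)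
      exact Relation.EqvGen.trans _ _ _ (Relation.EqvGen.symm _ _ (Relation.EqvGen.rel _ _ s1))
        (Relation.EqvGen.trans _ _ _ (Relation.EqvGen.symm _ _ (Relation.EqvGen.rel _ _ s2))
          (Relation.EqvGen.trans _ _ _ (Relation.EqvGen.rel _ _ s3)
            (Relation.EqvGen.trans _ _ _ (Relation.EqvGen.rel _ _ s4)
              (Relation.EqvGen.rel _ _ s5))))
    · rw [emb _ g1, emb2 _ (by omega)]
      have s1 : R a (2 * n - 1 - a) :=
        cs_left (mem_genMatch.mpr (Or.inr (Or.inr ⟨g1, g2, g3, rfl⟩)))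
      have s2 : R (2 * n - 1 - a) (2 * n + a) := cs_glue (j := a) g1 rfl rfl
      have s3 : R (2 * n + a) (2 * n + (2 * n - 1 - a)) :=
        cs_right (mem_idMatch.mpr ⟨g1, rfl⟩) rfl rfl
      exact Relation.EqvGen.trans _ _ _ (Relation.EqvGen.rel _ _ s1)
        (Relation.EqvGen.trans _ _ _ (Relation.EqvGen.rel _ _ s2) (Relation.EqvGen.rel _ _ s3))

lemma compose_step {n m j : ℕ} (hj : 1 ≤ j) (hjm : j + 1 ≤ m) (hm : m ≤ n - 1) :
    IsCompose n (genMatch n m) (shiftMatch n (m - 1) j) (shiftMatch n m (j + 1)) := by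
  have hn : 2 ≤ n := by omega
  have hm2 : 2 ≤ m := by omega
  set R := ComposeStep n (genMatch n m) (shiftMatch n (m - 1) j) with hR
  have emb : ∀ v, v < n → tlEmbed n v = v := fun v hv => if_pos hv
  have emb2 : ∀ v, n ≤ v → tlEmbed n v = 2 * n + v := fun v hv => if_neg (by omega)
  constructor
  · exact ncShift (by omega) (by omega) hm
  · rintro ⟨a, b⟩ he
    show Relation.EqvGen R (tlEmbed n a) (tlEmbed n b)
    rw [mem_shiftMatch] at he
    rcases he with ⟨rfl, rfl⟩ | ⟨rfl, rfl⟩ | ⟨g1, g2, rfl⟩ | ⟨g1, g2, rfl⟩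
    · rw [emb _ (by omega), emb _ (by omega)]
      exact Relation.EqvGen.rel _ _ (cs_left (mem_genMatch.mpr (Or.inl ⟨rfl, rfl⟩)))
    · -- bottom arc, equals the bottom arc of M₂
      rw [emb2 _ (by omega), emb2 _ (by omega)]
      exact Relation.EqvGen.rel _ _
        (cs_right (mem_shiftMatch.mpr (Or.inr (Or.inl ⟨rfl, rfl⟩))) (by omega) (by omega))
    · -- straight propagating line
      rw [emb _ g1, emb2 _ (by omega)]
      have s1 : R a (2 * n - 1 - a) :=
        cs_left (mem_genMatch.mpr (Or.inr (Or.inr ⟨g1, by omega, by omega, rfl⟩)))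
      have s2 : R (2 * n - 1 - a) (2 * n + a) := cs_glue (j := a) g1 rfl rfl
      have s3 : R (2 * n + a) (2 * n + (2 * n - 1 - a)) :=
        cs_right (mem_shiftMatch.mpr (Or.inr (Or.inr (Or.inl ⟨g1, by omega, rfl⟩)))) rfl rfl
      exact Relation.EqvGen.trans _ _ _ (Relation.EqvGen.rel _ _ s1)
        (Relation.EqvGen.trans _ _ _ (Relation.EqvGen.rel _ _ s2) (Relation.EqvGen.rel _ _ s3))
    · -- shifted propagating line
      rw [emb _ (by omega), emb2 _ (by omega)]
      by_cases hc : a + 2 < m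
      · -- goes straight through M₁, shifted in M₂
        have s1 : R a (2 * n - 1 - a) :=
          cs_left (mem_genMatch.mpr (Or.inr (Or.inr ⟨by omega, by omega, by omega, rfl⟩)))
        have s2 : R (2 * n - 1 - a) (2 * n + a) := cs_glue (j := a) (by omega) rfl rfl
        have s3 : R (2 * n + a) (2 * n + (2 * n - 3 - a)) :=
          cs_right (mem_shiftMatch.mpr (Or.inr (Or.inr (Or.inr ⟨by omega, by omega, rfl⟩)))) rfl rfl
        exact Relation.EqvGen.trans _ _ _ (Relation.EqvGen.rel _ _ s1)
          (Relation.EqvGen.trans _ _ _ (Relation.EqvGen.rel _ _ s2) (Relation.EqvGen.rel _ _ s3))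
      · -- a = m - 2 : the zigzag path
        obtain rfl : a = m - 2 := by omega
        have hb : 2 * n + (2 * n - 3 - (m - 2)) = 2 * n + (2 * n - m - 1) := by omega
        rw [hb]
        have s1 : R (m - 2) (2 * n - m + 1) :=
          cs_left (mem_genMatch.mpr (Or.inr (Or.inr ⟨by omega, by omega, by omega, by omega⟩)))
        have s2 : R (2 * n - m + 1) (2 * n + (m - 2)) :=
          cs_glue (j := m - 2) (by omega) (by omega) rfl
        have s3 : R (2 * n + (m - 2)) (2 * n + (m - 1)) :=
          cs_right (mem_shiftMatch.mpr (Or.inl ⟨rfl, rfl⟩)) (by omega) (by omega)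
        have s4 : R (2 * n - m) (2 * n + (m - 1)) :=
          cs_glue (j := m - 1) (by omega) (by omega) rfl
        have s5 : R (2 * n - m - 1) (2 * n - m) :=
          cs_left (mem_genMatch.mpr (Or.inr (Or.inl ⟨rfl, rfl⟩)))
        have s6 : R (2 * n - m - 1) (2 * n + m) :=
          cs_glue (j := m) (by omega) (by omega) rfl
        have s7 : R (2 * n + m) (2 * n + (2 * n - m - 1)) :=
          cs_right (mem_shiftMatch.mpr (Or.inr (Or.inr (Or.inl ⟨by omega, by omega, rfl⟩))))
            rfl (by omega)
        exact Relation.EqvGen.trans _ _ _ (Relation.EqvGen.rel _ _ s1)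
          (Relation.EqvGen.trans _ _ _ (Relation.EqvGen.rel _ _ s2)
            (Relation.EqvGen.trans _ _ _ (Relation.EqvGen.rel _ _ s3)
              (Relation.EqvGen.trans _ _ _ (Relation.EqvGen.symm _ _ (Relation.EqvGen.rel _ _ s4))
                (Relation.EqvGen.trans _ _ _ (Relation.EqvGen.symm _ _ (Relation.EqvGen.rel _ _ s5))
                  (Relation.EqvGen.trans _ _ _ (Relation.EqvGen.rel _ _ s6)
                    (Relation.EqvGen.rel _ _ s7))))))

lemma prod_shift {n : ℕ} : ∀ j m, 1 ≤ j → j ≤ m → m ≤ n - 1 →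
    IsProdOf n ((List.range j).map (fun i => genMatch n (m - i))) (shiftMatch n m j) := by
  intro j
  induction j with
  | zero => intro m h; exact absurd h (by omega)
  | succ j ih =>
    intro m hj hjm hm
    rw [List.range_succ_eq_map, List.map_cons, List.map_map]
    by_cases hj0 : j = 0
    · subst hj0
      simp only [List.range_zero, List.map_nil]
      refine ⟨idMatch n, rfl, ?_⟩
      have h1 : 1 ≤ m := by omega
      have : genMatch n (m - 0) = genMatch n m := by rw [Nat.sub_zero]
      rw [this, ← genMatch_eq_shift h1 hm]
      exact compose_base h1 hm
    · refine ⟨shiftMatch n (m - 1) j, ?_, ?_⟩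
      · have hfun : ((fun i => genMatch n (m - i)) ∘ Nat.succ) = (fun i => genMatch n (m - 1 - i)) := by
          funext i
          simp only [Function.comp_apply]
          congr 1
          omega
        rw [hfun]
        exact ih (m - 1) (by omega) (by omega) (by omega)
      · have : genMatch n (m - 0) = genMatch n m := by rw [Nat.sub_zero]
        rw [this]
        exact compose_step (by omega) (by omega) hm


/-- For `1 ≤ k ≤ n-1`, the product `u_{n-1} u_{n-2} ⋯ u_{n-k}`
in `TL_n` is, as a planar diagram, the matching with arcs `v_{n-1}v_n` and
`v_{n+k}v_{n+k+1}` and `n-2` propagating lines; under the outdegree bijection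
it is the triangulation consisting of the diagonal `p_{k+1}p_{k+3}` together
with `n-2` diagonals incident to `p₁`. -/
theorem stmt13 (n k : ℕ) (h1 : 1 ≤ k) (h2 : k ≤ n - 1) :
    IsProdOf n ((List.range k).map (fun j => genMatch n (n - 1 - j))) (prodMatch n k) ∧
    IsNCMatching n (prodMatch n k) ∧
    ∃ F : Finset (ℕ × ℕ),
      F.card = n - 2 ∧ (∀ e ∈ F, e.1 = 0) ∧
      IsTriangulation n (insert (k, k + 2) F) ∧
      ∀ t < n,
        BtoDn n (matchOutdeg (prodMatch n k)) t = triOutdeg (insert (k, k + 2) F) t := by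
  refine ⟨?_, ?_, fanF n k, card_fanF h1 h2, fanF_fst, tri_fanF h1 h2, ?_⟩
  · rw [prodMatch_eq_shift h1 h2]
    exact prod_shift k (n - 1) h1 h2 le_rfl
  · rw [prodMatch_eq_shift h1 h2]
    exact ncShift h1 h2 le_rfl
  · intro t ht
    rw [btodn_prodMatch h1 h2 t, triOutdeg_fanF h1 h2 t]
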